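/- arXiv:2001.05976 — 3 statements merged into one kernel-verified Lean document; each statement's English description precedes it below -/
import Mathlib

section
/- For every real ε with 0 < ε < 1, it holds that log(1 - ε²) ≥ -((1/2) · log((1+ε)/(1-ε)))². -/
/-- For every real ε with 0 < ε < 1, log(1 - ε²) ≥ -((1/2)·log((1+ε)/(1-ε)))². -/
theorem stmt_0 (ε : ℝ) (h0 : 0 < ε) (h1 : ε < 1) :
    Real.log (1 - ε ^ 2) ≥ -((1 / 2) * Real.log ((1 + ε) / (1 - ε))) ^ 2 := by
  set x : ℝ := (1 / 2) * Real.log ((1 + ε) / (1 - ε)) with hx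
  have hε1 : (0:ℝ) < 1 - ε := by linarith
  have hε2 : (0:ℝ) < 1 + ε := by linarith
  have hsq : (0:ℝ) < 1 - ε ^ 2 := by nlinarith
  have hr : (0:ℝ) < (1 + ε) / (1 - ε) := div_pos hε2 hε1
  have h2x : Real.exp (2 * x) = (1 + ε) / (1 - ε) := by
    rw [hx, show 2 * (1 / 2 * Real.log ((1 + ε) / (1 - ε))) = Real.log ((1+ε)/(1-ε)) by ring]
    exact Real.exp_log hr
  have hm2x : Real.exp (-(2 * x)) = (1 - ε) / (1 + ε) := by
    rw [Real.exp_neg, h2x, inv_div]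
  have e3 : Real.exp x * Real.exp (-x) = 1 := by
    rw [← Real.exp_add, add_neg_cancel, Real.exp_zero]
  have e1 : Real.exp x * Real.exp x = Real.exp (2 * x) := by
    rw [← Real.exp_add]; ring_nf
  have e2 : Real.exp (-x) * Real.exp (-x) = Real.exp (-(2 * x)) := by
    rw [← Real.exp_add]; ring_nf
  have hcosh : Real.cosh x ^ 2 = 1 / (1 - ε ^ 2) := by
    rw [Real.cosh_eq]
    have : ((Real.exp x + Real.exp (-x)) / 2) ^ 2 =
        (Real.exp x * Real.exp x + 2 * (Real.exp x * Real.exp (-x))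
          + Real.exp (-x) * Real.exp (-x)) / 4 := by ring
    rw [this, e1, e2, e3, h2x, hm2x]
    field_simp
    ring
  have hcoshpos : 0 < Real.cosh x := Real.cosh_pos x
  have hlogc : Real.log (Real.cosh x) ≤ x ^ 2 / 2 := by
    have := Real.log_le_log hcoshpos (Real.cosh_le_exp_half_sq x)
    rwa [Real.log_exp] at this
  have hlog : Real.log (1 - ε ^ 2) = -(2 * Real.log (Real.cosh x)) := by
    have h' : Real.log (1 - ε ^ 2) = - Real.log (Real.cosh x ^ 2) := by
      rw [hcosh, Real.log_div one_ne_zero (ne_of_gt hsq), Real.log_one]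
      ring
    rw [h', Real.log_pow]
    push_cast; ring
  rw [hlog]
  nlinarith [hlogc]
end

section
/- Let ε ∈ (0,1) satisfy log₂((1+ε)/(1-ε)) = α·√(log₂(3z)/k) for reals α > 2, z ≥ 1, k > log₂(3z). Suppose S is a finite set with |S| ≤ k, χ : S → {-1, +1} is a coloring, and with p = |{u ∈ S : χ(u) = 1}|, nn = |{u ∈ S : χ(u) = -1}|, d = p - nn, the quantity G = (1+ε)^p (1-ε)^nn + (1+ε)^nn (1-ε)^p satisfies G ≤ 3z. Then d ≤ α·√(k·log₂(3z)). -/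
set_option maxHeartbeats 1000000



/-- Auxiliary algebraic step, isolated to keep the context small. -/
lemma stmt_2_aux (α Q k W D l : ℝ) (hα : 2 < α) (hl : 0 < l) (hl2 : l < 1)
    (hQ : 0 < Q) (hkQ : Q < k) (hW : 0 < W) (hW2 : W ^ 2 = k * Q)
    (hmain : D * (2 * (l * α * W / (2 * k))) ≤ 2 * (Q * l) + k * (l * α * W / (2 * k)) ^ 2) :
    D ≤ α * W := by
  have hk0 : 0 < k := lt_trans hQ hkQ
  have h1 : D * (l * α * W) ≤ 2 * l * W ^ 2 + l ^ 2 * α ^ 2 * W ^ 2 / 4 := by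
    have h := mul_le_mul_of_nonneg_right hmain hk0.le
    have e1 : D * (2 * (l * α * W / (2 * k))) * k = D * (l * α * W) := by
      field_simp
    have e2 : (2 * (Q * l) + k * (l * α * W / (2 * k)) ^ 2) * k
        = 2 * l * (k * Q) + l ^ 2 * α ^ 2 * W ^ 2 / 4 := by
      field_simp; ring
    rw [e1, e2, ← hW2] at h
    linarith
  have h2 : 2 * l * W ^ 2 + l ^ 2 * α ^ 2 * W ^ 2 / 4 ≤ (α * W) * (l * α * W) := by
    have hW2pos : (0:ℝ) < W ^ 2 := by positivity
    have h2a : l ^ 2 * α ^ 2 * W ^ 2 / 4 ≤ l * α ^ 2 * W ^ 2 / 4 := by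
      have hll : 0 ≤ l - l ^ 2 := by nlinarith
      nlinarith [mul_nonneg (mul_nonneg hll (sq_nonneg α)) hW2pos.le]
    have h2b : 2 * l * W ^ 2 ≤ (α ^ 2 / 2) * l * W ^ 2 := by
      have : (4:ℝ) ≤ α ^ 2 := by nlinarith
      nlinarith [mul_pos hl hW2pos]
    have h2c : (α ^ 2 / 2) * l * W ^ 2 + l * α ^ 2 * W ^ 2 / 4 ≤ (α * W) * (l * α * W) := by
      nlinarith [mul_pos hl hW2pos, sq_nonneg α, mul_nonneg hl.le (mul_nonneg (sq_nonneg α) hW2pos.le)]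
    linarith
  have h3 : (0:ℝ) < l * α * W := by positivity
  exact le_of_mul_le_mul_right (le_trans h1 h2) h3

/-- Chazelle's potential-to-discrepancy step: if the potential
`G = (1+ε)^p (1-ε)^nn + (1+ε)^nn (1-ε)^p` is at most `3z`, then the discrepancy
`d = p - nn` is at most `α·√(k·log₂(3z))`. -/
theorem stmt_2 {U : Type*} (S : Finset U) (χ : U → ℤ)
    (α z k ε : ℝ) (hα : 2 < α) (hz : 1 ≤ z) (hk : Real.logb 2 (3 * z) < k)
    (hε0 : 0 < ε) (hε1 : ε < 1)
    (heq : Real.logb 2 ((1 + ε) / (1 - ε)) = α * Real.sqrt (Real.logb 2 (3 * z) / k))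
    (hScard : (S.card : ℝ) ≤ k)
    (hχ : ∀ u ∈ S, χ u = 1 ∨ χ u = -1)
    (p nn : ℕ)
    (hp : p = (S.filter fun u => χ u = 1).card)
    (hnn : nn = (S.filter fun u => χ u = -1).card)
    (hG : (1 + ε) ^ p * (1 - ε) ^ nn + (1 + ε) ^ nn * (1 - ε) ^ p ≤ 3 * z) :
    (p : ℝ) - nn ≤ α * Real.sqrt (k * Real.logb 2 (3 * z)) := by
  classical
  set Q : ℝ := Real.logb 2 (3 * z) with hQdef
  have hz3 : (1:ℝ) < 3 * z := by linarith
  have hQ : 0 < Q := Real.logb_pos (by norm_num) hz3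
  have hk0 : 0 < k := lt_trans hQ hk
  set W : ℝ := Real.sqrt (k * Q) with hWdef
  have hW : 0 < W := Real.sqrt_pos.mpr (by positivity)
  have hW2 : W ^ 2 = k * Q := Real.sq_sqrt (by positivity)
  rcases le_or_gt p nn with hpn | hpn
  · have h1 : (p:ℝ) ≤ nn := by exact_mod_cast hpn
    have h2 : 0 ≤ α * W := by positivity
    linarith
  have hl : (0:ℝ) < Real.log 2 := Real.log_pos (by norm_num)
  have hl2 : Real.log 2 < 1 := by
    have h := Real.log_lt_sub_one_of_pos (by norm_num : (0:ℝ) < 2) (by norm_num)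
    linarith
  have h1ε : (0:ℝ) < 1 - ε := by linarith
  have h1ε' : (0:ℝ) < 1 + ε := by linarith
  set r : ℝ := (1 + ε) / (1 - ε) with hrdef
  have hr0 : 0 < r := by positivity
  set t : ℝ := Real.log r / 2 with htdef
  have hr1 : 1 < r := by
    rw [hrdef, lt_div_iff₀ h1ε]; linarith
  have ht0 : 0 < t := by
    have := Real.log_pos hr1
    rw [htdef]; linarith
  -- sqrt(Q/k) = W/k
  have hkk : Real.sqrt k * Real.sqrt k = k := Real.mul_self_sqrt hk0.le
  have hsqrt : Real.sqrt (Q / k) = W / k := by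
    rw [Real.sqrt_div hQ.le, hWdef, Real.sqrt_mul hk0.le]
    have hsk : Real.sqrt k ≠ 0 := by positivity
    field_simp
    nlinarith [hkk, Real.sqrt_nonneg Q]
  -- t in terms of W
  have ht_eq : t = Real.log 2 * α * W / (2 * k) := by
    have h := heq
    rw [Real.logb, hsqrt, div_eq_iff (ne_of_gt hl)] at h
    rw [htdef, h]; field_simp
  -- D and m
  set D : ℕ := p - nn with hDdef
  have hpD : p = nn + D := by omega
  set m : ℕ := p + nn with hmdef
  have hm : (m : ℝ) ≤ k := by
    have hdisj : Disjoint (S.filter fun u => χ u = 1) (S.filter fun u => χ u = -1) :=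
      Finset.disjoint_filter.mpr (by intro u _ h1 h2; omega)
    have hcup := Finset.card_union_of_disjoint hdisj
    have hsub : (S.filter fun u => χ u = 1) ∪ (S.filter fun u => χ u = -1) ⊆ S :=
      Finset.union_subset (Finset.filter_subset _ _) (Finset.filter_subset _ _)
    have hcard := Finset.card_le_card hsub
    have hmn : m ≤ S.card := by rw [hmdef, hp, hnn]; omega
    calc (m:ℝ) ≤ (S.card : ℝ) := by exact_mod_cast hmn
    _ ≤ k := hScard
  -- the potential term A
  set A : ℝ := (1 + ε) ^ p * (1 - ε) ^ nn with hAdef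
  have hA0 : 0 < A := by positivity
  have hA3z : A ≤ 3 * z := by
    have : (0:ℝ) ≤ (1 + ε) ^ nn * (1 - ε) ^ p := by positivity
    linarith
  -- A^2 = (1-ε²)^m * r^D
  have hA2 : A ^ 2 = ((1 + ε) * (1 - ε)) ^ m * r ^ D := by
    rw [hAdef, hrdef, hmdef, hpD]
    rw [div_pow]
    field_simp
    simp only [show (1:ℝ) - ε ^ 2 = (1 + ε) * (1 - ε) by ring, mul_pow]
    ring
  -- log(1-ε²) ≥ -t²  via  cosh t ≤ exp(t²/2)
  have hprodpos : (0:ℝ) < (1 + ε) * (1 - ε) := by positivity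
  have hcosh2 : Real.cosh t ^ 2 = 1 / ((1 + ε) * (1 - ε)) := by
    rw [Real.cosh_eq]
    have he2 : Real.exp t * Real.exp t = r := by
      rw [← Real.exp_add, htdef]
      have : Real.log r / 2 + Real.log r / 2 = Real.log r := by ring
      rw [this, Real.exp_log hr0]
    have hen : Real.exp (-t) = (Real.exp t)⁻¹ := Real.exp_neg t
    rw [hen]
    have hept : (0:ℝ) < Real.exp t := Real.exp_pos t
    have step : ((Real.exp t + (Real.exp t)⁻¹) / 2) ^ 2
        = (Real.exp t * Real.exp t + 2 + (Real.exp t * Real.exp t)⁻¹) / 4 := by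
      field_simp
      ring
    rw [step, he2, hrdef]
    rw [div_eq_div_iff (by positivity) (by positivity)]
    field_simp
    ring
  have hexp2 : Real.exp (-t ^ 2) ≤ (1 + ε) * (1 - ε) := by
    have h1 : Real.cosh t ≤ Real.exp (t ^ 2 / 2) := Real.cosh_le_exp_half_sq t
    have h2 : Real.cosh t ^ 2 ≤ Real.exp (t ^ 2 / 2) ^ 2 := by
      exact pow_le_pow_left₀ (Real.cosh_pos t).le h1 2
    have h3 : Real.exp (t ^ 2 / 2) ^ 2 = Real.exp (t ^ 2) := by
      rw [sq, ← Real.exp_add]; ring_nf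
    rw [hcosh2, h3] at h2
    have h4 : Real.exp (-t ^ 2) * Real.exp (t ^ 2) = 1 := by
      rw [← Real.exp_add]; norm_num
    have h5 : 1 ≤ Real.exp (t ^ 2) * ((1 + ε) * (1 - ε)) :=
      (div_le_iff₀ hprodpos).mp h2
    nlinarith [Real.exp_pos (t ^ 2), h4, h5]
  have hlog1ε : -t ^ 2 ≤ Real.log ((1 + ε) * (1 - ε)) :=
    (Real.le_log_iff_exp_le hprodpos).mpr hexp2
  -- log of A² inequality
  have hlogA2 : Real.log (A ^ 2) = m * Real.log ((1 + ε) * (1 - ε)) + D * (2 * t) := by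
    rw [hA2, Real.log_mul (by positivity) (by positivity), Real.log_pow, Real.log_pow]
    rw [htdef]; ring
  have hlogA2' : Real.log (A ^ 2) ≤ 2 * (Q * Real.log 2) := by
    have h1 : Real.log (A ^ 2) = 2 * Real.log A := by
      rw [show A ^ 2 = A * A by ring, Real.log_mul hA0.ne' hA0.ne']; ring
    have h2 : Real.log A ≤ Real.log (3 * z) := Real.log_le_log hA0 hA3z
    have h3 : Real.log (3 * z) = Q * Real.log 2 := by
      rw [hQdef, Real.logb]; field_simp
    linarith
  -- main inequality: 2Dt ≤ 2 Q log2 + k t²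
  have hmain : (D:ℝ) * (2 * t) ≤ 2 * (Q * Real.log 2) + k * t ^ 2 := by
    have hmnat : (0:ℝ) ≤ (m:ℝ) := Nat.cast_nonneg m
    have h1 : (m:ℝ) * (-t ^ 2) ≤ (m:ℝ) * Real.log ((1 + ε) * (1 - ε)) :=
      mul_le_mul_of_nonneg_left hlog1ε hmnat
    nlinarith [sq_nonneg t]
  -- substitute t and finish
  rw [ht_eq] at hmain
  have hgoal : (D:ℝ) ≤ α * W :=
    stmt_2_aux α Q k W D (Real.log 2) hα hl hl2 hQ hk hW hW2 hmain
  have hcast : (p:ℝ) - nn = D := by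
    rw [hpD]; push_cast; ring
  rw [hcast]
  exact hgoal
end

section
/- Let b > 1 be a real number and x₁, x₂, …, x_ℓ a finite sequence of positive integers with sum s. Then the sequence can be partitioned into consecutive ranges S₁, S₂, …, S_r such that each range is either a singleton or has the sum of its elements at most b, and the number r of ranges satisfies r ≤ 2s/b + 1. -/
open Classical in
/-- Greedy: take the longest prefix keeping the running sum (starting at `acc`) at most `b`. -/
noncomputable def gsplit (b : ℝ) : ℝ → List ℕ → List ℕ × List ℕ
  | _, [] => ([], [])
  | acc, x :: xs =>
    if (acc + (x : ℝ)) ≤ b then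
      ((x :: (gsplit b (acc + (x : ℝ)) xs).1), (gsplit b (acc + (x : ℝ)) xs).2)
    else ([], x :: xs)

lemma gsplit_append (b : ℝ) (xs : List ℕ) : ∀ acc,
    (gsplit b acc xs).1 ++ (gsplit b acc xs).2 = xs := by
  induction xs with
  | nil => intro acc; simp [gsplit]
  | cons x xs ih =>
    intro acc
    by_cases h : (acc + (x : ℝ)) ≤ b
    · simp [gsplit, h, ih]
    · simp [gsplit, h]

lemma gsplit_sum (b : ℝ) (xs : List ℕ) : ∀ acc, acc ≤ b →
    acc + (((gsplit b acc xs).1.sum : ℕ) : ℝ) ≤ b := by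
  induction xs with
  | nil => intro acc h; simpa [gsplit] using h
  | cons x xs ih =>
    intro acc h
    by_cases h' : (acc + (x : ℝ)) ≤ b
    · have := ih (acc + (x : ℝ)) h'
      simp only [gsplit, h', if_true, List.sum_cons]
      push_cast
      push_cast at this
      linarith
    · simpa [gsplit, h'] using h

lemma gsplit_max (b : ℝ) (xs : List ℕ) : ∀ acc y r',
    (gsplit b acc xs).2 = y :: r' →
    b < acc + (((gsplit b acc xs).1.sum : ℕ) : ℝ) + (y : ℝ) := by
  induction xs with
  | nil => intro acc y r' h; simp [gsplit] at h
  | cons x xs ih =>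
    intro acc y r' h
    by_cases h' : (acc + (x : ℝ)) ≤ b
    · simp only [gsplit, h', if_true] at h ⊢
      have := ih (acc + (x : ℝ)) y r' h
      simp only [List.sum_cons, Nat.cast_add]
      linarith
    · simp only [gsplit, h', if_false] at h ⊢
      obtain ⟨rfl, rfl⟩ : x = y ∧ xs = r' := by
        constructor <;> [exact (List.cons.injEq _ _ _ _ ▸ h).1;
          exact (List.cons.injEq _ _ _ _ ▸ h).2]
      simp only [List.sum_nil, Nat.cast_zero]
      linarith [not_le.mp h']

lemma greedy_main (b : ℝ) (hb : 1 < b) : ∀ n (xs : List ℕ), xs.length ≤ n → xs ≠ [] →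
    ∃ L : List (List ℕ), L.flatten = xs ∧ (∀ l ∈ L, l ≠ []) ∧
      (∀ l ∈ L, l.length = 1 ∨ (l.sum : ℝ) ≤ b) ∧
      (L.length : ℝ) * b ≤ 2 * (xs.sum : ℝ) - (xs.headI : ℝ) + b := by
  intro n
  induction n with
  | zero =>
    intro xs hlen hne
    exact absurd (List.length_eq_zero_iff.mp (Nat.le_zero.mp hlen)) hne
  | succ n ih =>
    rintro xs hlen hne
    obtain ⟨x, t, rfl⟩ := List.exists_cons_of_ne_nil hne
    by_cases hx : (x : ℝ) ≤ b
    · -- greedy block from gsplit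
      set P := gsplit b 0 (x :: t) with hP
      have hsplit : P.1 ++ P.2 = x :: t := gsplit_append b (x :: t) 0
      have hPdef : P = ((x :: (gsplit b ((0:ℝ) + x) t).1), (gsplit b ((0:ℝ) + x) t).2) := by
        rw [hP]; simp [gsplit, hx]
      have hp1 : P.1 = x :: (gsplit b ((0:ℝ) + x) t).1 := by rw [hPdef]
      have hpsum : ((P.1.sum : ℕ) : ℝ) ≤ b := by
        have := gsplit_sum b (x :: t) 0 (by linarith)
        rw [← hP] at this; linarith
      have hxle : (x : ℝ) ≤ ((P.1.sum : ℕ) : ℝ) := by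
        have : x ≤ P.1.sum := by rw [hp1]; simp
        exact_mod_cast this
      rcases hr : P.2 with _ | ⟨y, r'⟩
      · -- single block
        refine ⟨[P.1], ?_, ?_, ?_, ?_⟩
        · simpa [hr] using hsplit
        · intro l hl; simp at hl; subst hl; rw [hp1]; simp
        · intro l hl; simp at hl; subst hl; right; exact hpsum
        · have hnat : P.1.sum = x + t.sum := by
            have h0 : P.1.sum = (x :: t).sum := by rw [← hsplit, hr]; simp
            simpa using h0
          have hsum : ((P.1.sum : ℕ) : ℝ) = (x : ℝ) + ((t.sum : ℕ) : ℝ) := by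
            rw [hnat]; push_cast; ring
          simp only [List.length_singleton, Nat.cast_one, one_mul, List.headI,
            List.sum_cons, Nat.cast_add]
          linarith
      · -- recurse on P.2
        have hmax : b < ((P.1.sum : ℕ) : ℝ) + (y : ℝ) := by
          have := gsplit_max b (x :: t) 0 y r' (hP ▸ hr)
          rw [← hP] at this; linarith
        have hp1ne : P.1 ≠ [] := by rw [hp1]; simp
        have hlen2 : P.2.length ≤ n := by
          have h1 : P.1.length + P.2.length = (x :: t).length := by
            rw [← hsplit]; simp
          have h2 : 1 ≤ P.1.length := List.length_pos_iff.mpr hp1ne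
          simp only [List.length_cons] at h1 hlen
          omega
        obtain ⟨L', hf', hne', hcond', hlen'⟩ := ih P.2 hlen2 (by rw [hr]; simp)
        refine ⟨P.1 :: L', ?_, ?_, ?_, ?_⟩
        · simp [hf', hsplit]
        · intro l hl; rcases List.mem_cons.mp hl with rfl | hl
          · exact hp1ne
          · exact hne' l hl
        · intro l hl; rcases List.mem_cons.mp hl with rfl | hl
          · right; exact hpsum
          · exact hcond' l hl
        · have hnat : x + t.sum = P.1.sum + P.2.sum := by
            rw [← List.sum_append, hsplit]; simp
          have hsum : (x : ℝ) + ((t.sum : ℕ) : ℝ)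
              = ((P.1.sum : ℕ) : ℝ) + ((P.2.sum : ℕ) : ℝ) := by
            exact_mod_cast congrArg (fun m : ℕ => (m : ℝ)) hnat
          have hhead : (P.2.headI : ℝ) = (y : ℝ) := by rw [hr]; simp
          rw [hhead] at hlen'
          simp only [List.length_cons, List.sum_cons, List.headI, Nat.cast_add,
            Nat.cast_one]
          nlinarith
    · -- x > b : singleton block [x]
      push_neg at hx
      rcases t with _ | ⟨y, t'⟩
      · refine ⟨[[x]], by simp, by simp, by simp, ?_⟩
        simp only [List.length_singleton, Nat.cast_one, one_mul, List.sum_singleton,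
          List.headI]
        push_cast
        linarith
      · obtain ⟨L', hf', hne', hcond', hlen'⟩ := ih (y :: t') (by simpa using hlen)
          (by simp)
        refine ⟨[x] :: L', by simp [hf'], ?_, ?_, ?_⟩
        · intro l hl; rcases List.mem_cons.mp hl with rfl | hl
          · simp
          · exact hne' l hl
        · intro l hl; rcases List.mem_cons.mp hl with rfl | hl
          · left; simp
          · exact hcond' l hl
        · simp only [List.length_cons, List.sum_cons, List.headI] at hlen' ⊢
          push_cast at hlen' ⊢
          have hy : (0:ℝ) ≤ (y : ℕ) := by positivity
          linarith

/-- A sequence of positive integers with sum s can be partitioned into consecutive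
ranges, each a singleton or of sum at most b, with at most 2s/b + 1 ranges. -/
theorem stmt_6 (b : ℝ) (hb : 1 < b) (xs : List ℕ) (hpos : ∀ x ∈ xs, 0 < x) :
    ∃ L : List (List ℕ), L.flatten = xs ∧ (∀ l ∈ L, l ≠ []) ∧
      (∀ l ∈ L, l.length = 1 ∨ (l.sum : ℝ) ≤ b) ∧
      (L.length : ℝ) ≤ 2 * (xs.sum : ℝ) / b + 1 := by
  have hb0 : (0:ℝ) < b := by linarith
  rcases eq_or_ne xs [] with rfl | hne
  · refine ⟨[], by simp, by simp, by simp, ?_⟩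
    simp
  · obtain ⟨L, hf, hn, hc, hl⟩ := greedy_main b hb xs.length xs le_rfl hne
    refine ⟨L, hf, hn, hc, ?_⟩
    have hhead : (0:ℝ) ≤ (xs.headI : ℝ) := by positivity
    have : (L.length : ℝ) ≤ (2 * (xs.sum : ℝ) + b) / b := by
      rw [le_div_iff₀ hb0]; linarith
    calc (L.length : ℝ) ≤ (2 * (xs.sum : ℝ) + b) / b := this
      _ = 2 * (xs.sum : ℝ) / b + 1 := by field_simp
end
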